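/- Let n ≥ 1, let K = ℂⁿ, let H = K ⊕ K, and let U, V be unitary operators on K. Consider the Parrott operators on H given in 2×2 block form by T₁ = [[0, 0], [I, 0]], T₂ = [[0, 0], [U, 0]], T₃ = [[0, 0], [V, 0]] (each sending (x, y) to (0, W x) with W = I, U, V respectively). Then each T_i is a contraction, T := T₁T₂T₃ = 0, dim 𝒟_T = 2n while dim 𝒟_{T₁} = dim 𝒟_{T₂} = dim 𝒟_{T₃} = n, and consequently the factorization T = T₁T₂T₃ is not 3-regular; in particular (T₁, T₂, T₃) is not a symmetric 3-regular tuple. -/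

import Mathlib

noncomputable section

open ContinuousLinearMap

/-- The defect operator `D_A = (I - A*A)^{1/2}` of a contraction `A`. -/
def defectOp {E F : Type*} [NormedAddCommGroup E] [InnerProductSpace ℂ E]
    [CompleteSpace E] [NormedAddCommGroup F] [InnerProductSpace ℂ F] [CompleteSpace F]
    (A : E →L[ℂ] F) : E →L[ℂ] E :=
  CFC.sqrt (1 - (adjoint A).comp A)

/-- The defect space `𝒟_A`, the closure of the range of the defect operator. -/
def defectSpace {E F : Type*} [NormedAddCommGroup E] [InnerProductSpace ℂ E]
    [CompleteSpace E] [NormedAddCommGroup F] [InnerProductSpace ℂ F] [CompleteSpace F]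
    (A : E →L[ℂ] F) : Submodule ℂ E :=
  (LinearMap.range (defectOp A : E →ₗ[ℂ] E)).topologicalClosure

theorem defectOp_mem {E F : Type*} [NormedAddCommGroup E] [InnerProductSpace ℂ E]
    [CompleteSpace E] [NormedAddCommGroup F] [InnerProductSpace ℂ F] [CompleteSpace F]
    (A : E →L[ℂ] F) (x : E) : defectOp A x ∈ defectSpace A :=
  Submodule.le_topologicalClosure _ (LinearMap.mem_range_self _ x)

variable {H : ℕ → Type*} [∀ n, NormedAddCommGroup (H n)] [∀ n, InnerProductSpace ℂ (H n)]
  [∀ n, CompleteSpace (H n)]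

/-- The product `A_{a+l-1} ⋯ A_{a+1} A_a : H a → H (a+l)` of a chain of operators. -/
def prodLen (A : ∀ n, H n →L[ℂ] H (n + 1)) (a : ℕ) : ∀ l : ℕ, H a →L[ℂ] H (a + l)
  | 0 => ContinuousLinearMap.id ℂ (H a)
  | l + 1 => (A (a + l)).comp (prodLen A a l)

/-- The product `A_{b-1} ⋯ A_{a+1} A_a : H a → H b` (junk value `0` if `b < a`). -/
def prodSeg (A : ∀ n, H n →L[ℂ] H (n + 1)) (a b : ℕ) : H a →L[ℂ] H b :=
  if h : a ≤ b then (Nat.add_sub_cancel' h ▸ prodLen A a (b - a)) else 0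

/-- The tuple `(D_{A_k} A_{k-1} ⋯ A_1 h, …, D_{A_2} A_1 h, D_{A_1} h)` (with zero-based
indexing: component `i` is `D_{A i} (A_{i-1} ⋯ A_0 h)`), viewed as an element of the
Hilbert (ℓ²) direct sum of the defect spaces. -/
def defectTuple (A : ∀ n, H n →L[ℂ] H (n + 1)) (k : ℕ) (h : H 0) :
    PiLp 2 (fun i : Fin k => ↥(defectSpace (A i))) :=
  WithLp.toLp 2 fun i => ⟨defectOp (A i) (prodSeg A 0 i h), defectOp_mem _ _⟩

/-- The factorization `A = A_{k-1} ⋯ A_0` is `k`-regular if the set of defect tuples is dense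
in the Hilbert direct sum of the defect spaces. -/
def IsRegularFactorization (A : ∀ n, H n →L[ℂ] H (n + 1)) (k : ℕ) : Prop :=
  Dense (Set.range (defectTuple A k))

/-- A two-factor factorization `A = B ∘ C` is `2`-regular if
`{ D_B (C h) ⊕ D_C h : h }` is dense in `𝒟_B ⊕ 𝒟_C`. -/
def IsRegularPair {E F G : Type*} [NormedAddCommGroup E] [InnerProductSpace ℂ E]
    [CompleteSpace E] [NormedAddCommGroup F] [InnerProductSpace ℂ F] [CompleteSpace F]
    [NormedAddCommGroup G] [InnerProductSpace ℂ G] [CompleteSpace G]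
    (B : F →L[ℂ] G) (C : E →L[ℂ] F) : Prop :=
  Dense (Set.range fun h : E =>
    ((WithLp.equiv 2 (↥(defectSpace B) × ↥(defectSpace C))).symm
      (⟨defectOp B (C h), defectOp_mem _ _⟩, ⟨defectOp C h, defectOp_mem _ _⟩)))

end

noncomputable section
/-- The chain of operators corresponding to the ordered product
`T_{σ(1)} T_{σ(2)} ⋯ T_{σ(k)}` of a `k`-tuple of operators on a single space: the operator
applied first (index `0` in the chain) is `T_{σ(k)}`, and the one applied last is `T_{σ(1)}`. -/
def chainOf {E : Type*} [NormedAddCommGroup E] [InnerProductSpace ℂ E] [CompleteSpace E]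
    {k : ℕ} (T : Fin k → (E →L[ℂ] E)) (σ : Equiv.Perm (Fin k)) : ℕ → (E →L[ℂ] E) :=
  fun n => if h : n < k then T (σ ((⟨n, h⟩ : Fin k).rev)) else 1
end

noncomputable section
/-- The Parrott operator on `H = K ⊕ K` (Hilbert direct sum) associated with `W : K → K`:
it sends `(x, y)` to `(0, W x)`; in block form `[[0, 0], [W, 0]]`. -/
def parrottOp {K : Type*} [NormedAddCommGroup K] [InnerProductSpace ℂ K] [CompleteSpace K]
    (W : K →L[ℂ] K) : WithLp 2 (K × K) →L[ℂ] WithLp 2 (K × K) :=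
  (((WithLp.prodContinuousLinearEquiv 2 ℂ K K).symm.toContinuousLinearMap).comp
    (((0 : K →L[ℂ] K).prod W).comp (ContinuousLinearMap.fst ℂ K K))).comp
    (WithLp.prodContinuousLinearEquiv 2 ℂ K K).toContinuousLinearMap
end

/-! For an isometry `W`, the Parrott operator `T_W = [[0, 0], [W, 0]]` satisfies
`T_W* T_W = 1 - Q` with `Q` the orthogonal projection onto `0 ⊕ K`; since `1 - (1 - Q) = Q` is
a projection, `D_{T_W} = Q` and `𝒟_{T_W} = 0 ⊕ K` has dimension `n`. Any product of two Parrott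
operators vanishes, so `D_T = 1` and `𝒟_T = H`. The defect tuple depends linearly on `h`, so in
finite dimension its range is closed, and density would give `3n ≤ dim H = 2n`; the same count
applies to every ordering of the factors. -/

noncomputable section

open ContinuousLinearMap

section WithLpProd

variable {α β : Type*} {p : ENNReal}

lemma WithLp.prod_ext {x y : WithLp p (α × β)} (h₁ : x.fst = y.fst) (h₂ : x.snd = y.snd) :
    x = y :=
  WithLp.ofLp_injective p (Prod.ext h₁ h₂)

variable {𝕜 : Type*} [DivisionRing 𝕜] [AddCommGroup α] [Module 𝕜 α] [AddCommGroup β]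
  [Module 𝕜 β] [Module.Finite 𝕜 α] [Module.Finite 𝕜 β]

instance : Module.Finite 𝕜 (WithLp p (α × β)) :=
  Module.Finite.equiv (WithLp.linearEquiv p 𝕜 _).symm

lemma finrank_withLp_prod :
    Module.finrank 𝕜 (WithLp p (α × β)) = Module.finrank 𝕜 α + Module.finrank 𝕜 β := by
  rw [LinearEquiv.finrank_eq (WithLp.linearEquiv p 𝕜 _), Module.finrank_prod]

end WithLpProd

lemma CFC.sqrt_eq_self_of_isStarProjection {A : Type*} [CStarAlgebra A] [PartialOrder A]
    [StarOrderedRing A] {p : A} (hp : IsStarProjection p) : CFC.sqrt p = p :=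
  CFC.sqrt_unique hp.isIdempotentElem.eq hp.nonneg

section Defect

variable {E F : Type*} [NormedAddCommGroup E] [InnerProductSpace ℂ E] [CompleteSpace E]
  [NormedAddCommGroup F] [InnerProductSpace ℂ F] [CompleteSpace F]

lemma defectOp_eq_of_adjoint_comp_self {A : E →L[ℂ] F} {p : E →L[ℂ] E}
    (hp : IsStarProjection p) (hA : (adjoint A).comp A = 1 - p) : defectOp A = p := by
  rw [defectOp, hA, sub_sub_cancel, CFC.sqrt_eq_self_of_isStarProjection hp]

lemma defectSpace_zero : defectSpace (0 : E →L[ℂ] F) = ⊤ := by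
  have hdefect : defectOp (0 : E →L[ℂ] F) = 1 :=
    defectOp_eq_of_adjoint_comp_self (IsStarProjection.one _) (by simp)
  rw [defectSpace, hdefect, LinearMap.range_eq_top.mpr fun x => ⟨x, rfl⟩]
  exact top_le_iff.mp (Submodule.le_topologicalClosure _)

lemma defectSpace_eq_range [FiniteDimensional ℂ E] (A : E →L[ℂ] F) :
    defectSpace A = LinearMap.range (defectOp A : E →ₗ[ℂ] E) :=
  (Submodule.closed_of_finiteDimensional _).submodule_topologicalClosure_eq

end Defect

section Parrott

variable {K : Type*} [NormedAddCommGroup K] [InnerProductSpace ℂ K]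

variable (K) in
def l2Inr : K →L[ℂ] WithLp 2 (K × K) :=
  (WithLp.prodContinuousLinearEquiv 2 ℂ K K).symm.toContinuousLinearMap.comp
    (ContinuousLinearMap.inr ℂ K K)

variable (K) in
def l2SndProj : WithLp 2 (K × K) →L[ℂ] WithLp 2 (K × K) :=
  (l2Inr K).comp ((ContinuousLinearMap.snd ℂ K K).comp
    (WithLp.prodContinuousLinearEquiv 2 ℂ K K).toContinuousLinearMap)

@[simp] lemma l2Inr_fst (y : K) : (l2Inr K y).fst = 0 := rfl
@[simp] lemma l2Inr_snd (y : K) : (l2Inr K y).snd = y := rfl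
@[simp] lemma l2SndProj_fst (u : WithLp 2 (K × K)) : (l2SndProj K u).fst = 0 := rfl
@[simp] lemma l2SndProj_snd (u : WithLp 2 (K × K)) : (l2SndProj K u).snd = u.snd := rfl

lemma range_l2SndProj :
    LinearMap.range (l2SndProj K : WithLp 2 (K × K) →ₗ[ℂ] WithLp 2 (K × K)) =
      LinearMap.range (l2Inr K : K →ₗ[ℂ] WithLp 2 (K × K)) :=
  LinearMap.range_comp_of_range_eq_top _
    (LinearMap.range_eq_top.mpr fun y => ⟨WithLp.toLp 2 (0, y), rfl⟩)

variable [CompleteSpace K]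

lemma isStarProjection_l2SndProj : IsStarProjection (l2SndProj K) where
  isIdempotentElem := by
    ext1 u
    exact WithLp.prod_ext (by simp) (by simp)
  isSelfAdjoint := by
    rw [ContinuousLinearMap.isSelfAdjoint_iff_isSymmetric]
    intro x y
    simp [WithLp.prod_inner_apply]

@[simp] lemma parrottOp_fst (W : K →L[ℂ] K) (u : WithLp 2 (K × K)) :
    (parrottOp W u).fst = 0 := rfl
@[simp] lemma parrottOp_snd (W : K →L[ℂ] K) (u : WithLp 2 (K × K)) :
    (parrottOp W u).snd = W u.fst := rfl

lemma norm_parrottOp_le (W : K →L[ℂ] K) : ‖parrottOp W‖ ≤ ‖W‖ := by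
  refine opNorm_le_bound _ (norm_nonneg W) fun u => ?_
  calc ‖parrottOp W u‖ = ‖W u.fst‖ := by simp [WithLp.prod_norm_eq_of_L2]
    _ ≤ ‖W‖ * ‖u.fst‖ := W.le_opNorm _
    _ ≤ ‖W‖ * ‖u‖ := by gcongr; exact WithLp.norm_fst_le _ u

lemma norm_parrottOp_le_one {W : K →L[ℂ] K} (hW : Isometry W) : ‖parrottOp W‖ ≤ 1 :=
  (norm_parrottOp_le W).trans <| opNorm_le_bound _ zero_le_one fun x => by
    rw [one_mul, (AddMonoidHomClass.isometry_iff_norm W).mp hW]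

lemma parrottOp_comp_parrottOp (W₁ W₂ : K →L[ℂ] K) :
    (parrottOp W₁).comp (parrottOp W₂) = 0 := by
  ext1 u
  exact WithLp.prod_ext (by simp) (by simp)

lemma adjoint_comp_parrottOp {W : K →L[ℂ] K} (hW : Isometry W) :
    (adjoint (parrottOp W)).comp (parrottOp W) = 1 - l2SndProj K := by
  have hWinner : ∀ x y : K, inner ℂ (W x) (W y) = inner ℂ x y :=
    W.inner_map_map_iff_adjoint_comp_self.mpr (W.isometry_iff_adjoint_comp_self.mp hW)
  ext1 u
  refine ext_inner_right ℂ fun v => ?_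
  simp [adjoint_inner_left, WithLp.prod_inner_apply, hWinner, inner_sub_left]

lemma defectOp_parrottOp {W : K →L[ℂ] K} (hW : Isometry W) :
    defectOp (parrottOp W) = l2SndProj K :=
  defectOp_eq_of_adjoint_comp_self isStarProjection_l2SndProj (adjoint_comp_parrottOp hW)

lemma finrank_defectSpace_parrottOp [FiniteDimensional ℂ K] {W : K →L[ℂ] K}
    (hW : Isometry W) :
    Module.finrank ℂ (defectSpace (parrottOp W)) = Module.finrank ℂ K := by
  rw [defectSpace_eq_range, defectOp_parrottOp hW, range_l2SndProj]
  exact LinearMap.finrank_range_of_inj fun x y hxy => congrArg (·.snd) hxy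

end Parrott

section Regular

variable {H : ℕ → Type*} [∀ n, NormedAddCommGroup (H n)] [∀ n, InnerProductSpace ℂ (H n)]
  [∀ n, CompleteSpace (H n)]

def defectTupleₗ (A : ∀ n, H n →L[ℂ] H (n + 1)) (k : ℕ) :
    H 0 →ₗ[ℂ] PiLp 2 (fun i : Fin k => defectSpace (A i)) where
  toFun := defectTuple A k
  map_add' x y := WithLp.ofLp_injective 2 <| funext fun i => Subtype.ext <| by
    simp [defectTuple]
  map_smul' c x := WithLp.ofLp_injective 2 <| funext fun i => Subtype.ext <| by
    simp [defectTuple]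

lemma IsRegularFactorization.finrank_sum_le [∀ n, FiniteDimensional ℂ (H n)]
    {A : ∀ n, H n →L[ℂ] H (n + 1)} {k : ℕ} (hA : IsRegularFactorization A k) :
    ∑ i : Fin k, Module.finrank ℂ (defectSpace (A i)) ≤ Module.finrank ℂ (H 0) := by
  have hdense : Dense (Set.range (defectTupleₗ A k)) := hA
  rw [← LinearMap.coe_range] at hdense
  have hrange : LinearMap.range (defectTupleₗ A k) = ⊤ :=
    (Submodule.closed_of_finiteDimensional _).submodule_topologicalClosure_eq.symm.trans
      (Submodule.dense_iff_topologicalClosure_eq_top.mp hdense)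
  calc ∑ i : Fin k, Module.finrank ℂ (defectSpace (A i))
      = Module.finrank ℂ (PiLp 2 fun i : Fin k => defectSpace (A i)) := by
        rw [LinearEquiv.finrank_eq (WithLp.linearEquiv 2 ℂ _), Module.finrank_pi_fintype]
    _ = Module.finrank ℂ (LinearMap.range (defectTupleₗ A k)) := by rw [hrange, finrank_top]
    _ ≤ Module.finrank ℂ (H 0) := LinearMap.finrank_range_le _

end Regular

lemma not_isRegularFactorization_chainOf_parrottOp {K : Type*} [NormedAddCommGroup K]
    [InnerProductSpace ℂ K] [CompleteSpace K] [FiniteDimensional ℂ K]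
    (hK : 0 < Module.finrank ℂ K) {k : ℕ} (hk : 3 ≤ k) {W : Fin k → K →L[ℂ] K}
    (hW : ∀ i, Isometry (W i)) (σ : Equiv.Perm (Fin k)) :
    ¬ IsRegularFactorization (H := fun _ => WithLp 2 (K × K))
      (chainOf (fun i => parrottOp (W i)) σ) k := by
  intro hreg
  have hdefect (i : Fin k) :
      Module.finrank ℂ (defectSpace (chainOf (fun i => parrottOp (W i)) σ i)) =
        Module.finrank ℂ K := by
    have hchain : chainOf (fun i => parrottOp (W i)) σ i = parrottOp (W (σ i.rev)) := by
      simp [chainOf]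
    rw [hchain]
    exact finrank_defectSpace_parrottOp (hW _)
  have := hreg.finrank_sum_le
  simp only [hdefect, Finset.sum_const, Finset.card_univ, Fintype.card_fin, smul_eq_mul,
    finrank_withLp_prod] at this
  nlinarith

end

theorem statement19_general (n : ℕ) (hn : 1 ≤ n)
    (U V : EuclideanSpace ℂ (Fin n) →L[ℂ] EuclideanSpace ℂ (Fin n))
    (hUiso : Isometry U)
    (hViso : Isometry V)
    (T₁ T₂ T₃ : WithLp 2 (EuclideanSpace ℂ (Fin n) × EuclideanSpace ℂ (Fin n)) →L[ℂ]
      WithLp 2 (EuclideanSpace ℂ (Fin n) × EuclideanSpace ℂ (Fin n)))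
    (hT₁ : T₁ = parrottOp (ContinuousLinearMap.id ℂ (EuclideanSpace ℂ (Fin n))))
    (hT₂ : T₂ = parrottOp U) (hT₃ : T₃ = parrottOp V) :
    (‖T₁‖ ≤ 1 ∧ ‖T₂‖ ≤ 1 ∧ ‖T₃‖ ≤ 1) ∧
    T₁.comp (T₂.comp T₃) = 0 ∧
    Module.finrank ℂ ↥(defectSpace (T₁.comp (T₂.comp T₃))) = 2 * n ∧
    (Module.finrank ℂ ↥(defectSpace T₁) = n ∧
      Module.finrank ℂ ↥(defectSpace T₂) = n ∧
      Module.finrank ℂ ↥(defectSpace T₃) = n) ∧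
    ¬ IsRegularFactorization
        (H := fun _ => WithLp 2 (EuclideanSpace ℂ (Fin n) × EuclideanSpace ℂ (Fin n)))
        (chainOf ![T₁, T₂, T₃] (Equiv.refl (Fin 3))) 3 ∧
    ¬ ∀ σ : Equiv.Perm (Fin 3),
        IsRegularFactorization
          (H := fun _ => WithLp 2 (EuclideanSpace ℂ (Fin n) × EuclideanSpace ℂ (Fin n)))
          (chainOf ![T₁, T₂, T₃] σ) 3 := by
  subst hT₁ hT₂ hT₃
  set I := ContinuousLinearMap.id ℂ (EuclideanSpace ℂ (Fin n))
  have hIiso : Isometry I := isometry_id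
  have hdim : Module.finrank ℂ (EuclideanSpace ℂ (Fin n)) = n := finrank_euclideanSpace_fin
  have hprod : (parrottOp I).comp ((parrottOp U).comp (parrottOp V)) = 0 := by
    rw [parrottOp_comp_parrottOp, ContinuousLinearMap.comp_zero]
  have htuple :
      ![parrottOp I, parrottOp U, parrottOp V] = fun i => parrottOp (![I, U, V] i) := by
    ext1 i; fin_cases i <;> rfl
  have hiso : ∀ i, Isometry (![I, U, V] i) := by
    intro i; fin_cases i <;> assumption
  have hirregular (σ : Equiv.Perm (Fin 3)) : ¬ IsRegularFactorization
      (H := fun _ => WithLp 2 (EuclideanSpace ℂ (Fin n) × EuclideanSpace ℂ (Fin n)))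
      (chainOf ![parrottOp I, parrottOp U, parrottOp V] σ) 3 := by
    rw [htuple]
    exact not_isRegularFactorization_chainOf_parrottOp (by omega) le_rfl hiso σ
  refine ⟨⟨norm_parrottOp_le_one hIiso, norm_parrottOp_le_one hUiso,
    norm_parrottOp_le_one hViso⟩, hprod, ?_, ⟨?_, ?_, ?_⟩, hirregular _,
    fun hall => hirregular (Equiv.refl _) (hall _)⟩
  · rw [hprod, defectSpace_zero, finrank_top, finrank_withLp_prod, hdim, two_mul]
  · rw [finrank_defectSpace_parrottOp hIiso, hdim]
  · rw [finrank_defectSpace_parrottOp hUiso, hdim]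
  · rw [finrank_defectSpace_parrottOp hViso, hdim]

/-- For unitaries `U, V` on `K = ℂⁿ`, the Parrott operators
`T₁ = [[0,0],[I,0]]`, `T₂ = [[0,0],[U,0]]`, `T₃ = [[0,0],[V,0]]` on `H = K ⊕ K` are
contractions with `T = T₁T₂T₃ = 0`, `dim 𝒟_T = 2n` while
`dim 𝒟_{T₁} = dim 𝒟_{T₂} = dim 𝒟_{T₃} = n`; the factorization `T = T₁T₂T₃` is not
`3`-regular, and `(T₁, T₂, T₃)` is not a symmetric `3`-regular tuple. -/
theorem statement19 (n : ℕ) (hn : 1 ≤ n)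
    (U V : EuclideanSpace ℂ (Fin n) →L[ℂ] EuclideanSpace ℂ (Fin n))
    (hUiso : Isometry U) (hUsurj : Function.Surjective U)
    (hViso : Isometry V) (hVsurj : Function.Surjective V)
    (T₁ T₂ T₃ : WithLp 2 (EuclideanSpace ℂ (Fin n) × EuclideanSpace ℂ (Fin n)) →L[ℂ]
      WithLp 2 (EuclideanSpace ℂ (Fin n) × EuclideanSpace ℂ (Fin n)))
    (hT₁ : T₁ = parrottOp (ContinuousLinearMap.id ℂ (EuclideanSpace ℂ (Fin n))))
    (hT₂ : T₂ = parrottOp U) (hT₃ : T₃ = parrottOp V) :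
    (‖T₁‖ ≤ 1 ∧ ‖T₂‖ ≤ 1 ∧ ‖T₃‖ ≤ 1) ∧
    T₁.comp (T₂.comp T₃) = 0 ∧
    Module.finrank ℂ ↥(defectSpace (T₁.comp (T₂.comp T₃))) = 2 * n ∧
    (Module.finrank ℂ ↥(defectSpace T₁) = n ∧
      Module.finrank ℂ ↥(defectSpace T₂) = n ∧
      Module.finrank ℂ ↥(defectSpace T₃) = n) ∧
    ¬ IsRegularFactorization
        (H := fun _ => WithLp 2 (EuclideanSpace ℂ (Fin n) × EuclideanSpace ℂ (Fin n)))
        (chainOf ![T₁, T₂, T₃] (Equiv.refl (Fin 3))) 3 ∧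
    ¬ ∀ σ : Equiv.Perm (Fin 3),
        IsRegularFactorization
          (H := fun _ => WithLp 2 (EuclideanSpace ℂ (Fin n) × EuclideanSpace ℂ (Fin n)))
          (chainOf ![T₁, T₂, T₃] σ) 3 :=
  statement19_general n hn U V hUiso hViso T₁ T₂ T₃ hT₁ hT₂ hT₃
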